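/- arXiv:1505.04822 — 4 statements merged into one kernel-verified Lean document; each statement's English description precedes it below -/
import Mathlib

section
/- For every natural number d ≥ 1, the sum ∑_{p=0}^{∞} ∑_{r=0}^{p} (-1)^r C(p,r) (r+1)(r+2)⋯(r+d) equals 0, where only finitely many outer summands are nonzero. -/
open Finset

/-- The `p`-th alternating binomial sum of the rising-factorial polynomial
`q_{(d)}(r) = (r+1)(r+2)⋯(r+d)`. -/
noncomputable def altBinomSumRising (d p : ℕ) : ℚ :=
  ∑ r ∈ Finset.range (p + 1),
    (-1 : ℚ) ^ r * (p.choose r) * ∏ i ∈ Finset.range d, ((r : ℚ) + (i : ℚ) + 1)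

open fwdDiff Nat

/-- The rising factorial as a factorial times a binomial coefficient. -/
lemma rising_eq_choose (d r : ℕ) :
    (∏ i ∈ Finset.range d, ((r : ℚ) + (i : ℚ) + 1)) = (d ! * (r + d).choose d : ℕ) := by
  have h : ∏ i ∈ Finset.range d, (r + 1 + i) = (r + 1).ascFactorial d := by
    induction d with
    | zero => simp
    | succ k ih => rw [Finset.prod_range_succ, ih, Nat.ascFactorial_succ, mul_comm]
  rw [← Nat.ascFactorial_eq_factorial_mul_choose, ← h]
  push_cast
  exact Finset.prod_congr rfl fun i _ => by ring

lemma fwdDiff_choose_q (j : ℕ) :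
    Δ_[1] (fun x ↦ (x.choose (j + 1) : ℚ) : ℕ → ℚ) = fun x ↦ (x.choose j : ℚ) := by
  ext n
  simp only [fwdDiff, Nat.choose_succ_succ' n j, Nat.cast_add, add_sub_cancel_right]

lemma fwdDiff_iter_choose_q (j k : ℕ) :
    (Δ_[1])^[k] (fun x ↦ (x.choose (k + j) : ℚ) : ℕ → ℚ) = fun x ↦ (x.choose j : ℚ) := by
  induction k generalizing j with
  | zero => simp
  | succ k IH =>
      simp only [Function.iterate_succ_apply', add_assoc, add_comm 1 j, IH, fwdDiff_choose_q]

lemma fwdDiff_iter_zero_fun (k : ℕ) :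
    (Δ_[1])^[k] (fun _ ↦ (0 : ℚ) : ℕ → ℚ) = fun _ ↦ (0 : ℚ) := by
  induction k with
  | zero => rfl
  | succ k IH => rw [Function.iterate_succ_apply, show Δ_[1] (fun _ ↦ (0:ℚ) : ℕ → ℚ)
      = fun _ ↦ (0:ℚ) from fwdDiff_const 1 0, IH]

lemma fwdDiff_shift (c : ℕ) (f : ℕ → ℚ) :
    Δ_[1] (fun x ↦ f (x + c)) = fun x ↦ Δ_[1] f (x + c) := by
  ext x
  simp only [fwdDiff]
  ring_nf

lemma fwdDiff_iter_shift (p c : ℕ) (f : ℕ → ℚ) :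
    (Δ_[1])^[p] (fun x ↦ f (x + c)) = fun x ↦ (Δ_[1])^[p] f (x + c) := by
  induction p generalizing f with
  | zero => simp
  | succ p IH =>
      rw [Function.iterate_succ_apply, fwdDiff_shift, IH, Function.iterate_succ_apply]

/-- The key closed form for the alternating binomial sum. -/
lemma altBinomSumRising_eq (d p : ℕ) :
    altBinomSumRising d p = (-1 : ℚ) ^ p * d ! * d.choose p := by
  have hdiff : (Δ_[1])^[p] (fun r : ℕ ↦ ((r + d).choose d : ℚ)) 0 = (d.choose p : ℚ) := by
    have := fwdDiff_iter_shift p d (fun x : ℕ ↦ (x.choose d : ℚ))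
    rw [show (fun r : ℕ ↦ ((r + d).choose d : ℚ)) =
        (fun x : ℕ ↦ ((fun y : ℕ ↦ (y.choose d : ℚ)) (x + d))) from rfl, this]
    simp only [Nat.zero_add]
    rcases le_or_gt p d with hpd | hpd
    · obtain ⟨j, rfl⟩ := Nat.exists_eq_add_of_le hpd
      rw [fwdDiff_iter_choose_q j p]
      have hs := Nat.choose_symm (Nat.le_add_right p j)
      rw [Nat.add_sub_cancel_left] at hs
      show ((p + j).choose j : ℚ) = _
      exact_mod_cast hs
    · obtain ⟨m, rfl⟩ := Nat.exists_eq_add_of_lt hpd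
      rw [Nat.choose_eq_zero_of_lt hpd, Nat.cast_zero,
        show d + m + 1 = (m + 1) + d by omega, Function.iterate_add_apply]
      have h1 : (Δ_[1])^[d] (fun x : ℕ ↦ (x.choose d : ℚ)) = fun x : ℕ ↦ (x.choose 0 : ℚ) := by
        have := fwdDiff_iter_choose_q 0 d
        simpa using this
      rw [h1]
      have h2 : (fun x : ℕ ↦ (x.choose 0 : ℚ)) = fun _ : ℕ ↦ (1 : ℚ) := by
        ext x; simp
      rw [h2, Function.iterate_succ_apply, show Δ_[1] (fun _ : ℕ ↦ (1:ℚ))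
        = fun _ ↦ (0:ℚ) from fwdDiff_const 1 1, fwdDiff_iter_zero_fun]
  have hsum := fwdDiff_iter_eq_sum_shift (1 : ℕ) (fun r : ℕ ↦ ((r + d).choose d : ℚ)) p 0
  have hval : altBinomSumRising d p
      = (-1 : ℚ) ^ p * (d ! : ℚ) * (Δ_[1])^[p] (fun r : ℕ ↦ ((r + d).choose d : ℚ)) 0 := by
    rw [hsum, Finset.mul_sum]
    unfold altBinomSumRising
    refine Finset.sum_congr rfl fun r hr => ?_
    have hrp : r ≤ p := by
      simp only [Finset.mem_range] at hr; omega
    rw [rising_eq_choose]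
    have hz : ((((-1 : ℤ) ^ (p - r) * (p.choose r : ℤ)) • ((((0 + r • 1 : ℕ)) + d).choose d : ℚ)))
        = ((-1 : ℚ) ^ (p - r) * (p.choose r : ℚ)) * (((r + d).choose d : ℚ)) := by
      have h01 : (0 + r • 1 : ℕ) = r := by simp
      rw [h01, zsmul_eq_mul]
      push_cast
      ring
    rw [hz]
    have hsign : (-1 : ℚ) ^ r = (-1 : ℚ) ^ p * (-1 : ℚ) ^ (p - r) := by
      rw [← pow_add, show p + (p - r) = 2 * (p - r) + r by omega, pow_add, pow_mul]
      simp
    rw [hsign]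
    push_cast
    ring
  rw [hval, hdiff]

theorem altBinomSumRising_support_subset (d : ℕ) :
    Function.support (altBinomSumRising d) ⊆ Set.Iic d := by
  intro p hp
  simp only [Function.mem_support] at hp
  by_contra hpd
  simp only [Set.mem_Iic, not_le] at hpd
  apply hp
  rw [altBinomSumRising_eq, Nat.choose_eq_zero_of_lt hpd]
  simp

/-- For every `d ≥ 1`, the sum `∑_{p≥0} ∑_{r=0}^p (-1)^r C(p,r) (r+1)(r+2)⋯(r+d)` equals `0`,
with only finitely many nonzero outer summands. -/
theorem sum_altBinomSumRising_eq_zero (d : ℕ) (hd : 1 ≤ d) :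
    (Function.support (altBinomSumRising d)).Finite ∧
      ∑ᶠ p : ℕ, altBinomSumRising d p = 0 := by
  have hfin : (Function.support (altBinomSumRising d)).Finite :=
    Set.Finite.subset (Set.finite_Iic d) (altBinomSumRising_support_subset d)
  refine ⟨hfin, ?_⟩
  have hsub : Function.support (altBinomSumRising d) ⊆ ↑(Finset.range (d + 1)) := by
    intro p hp
    have := altBinomSumRising_support_subset d hp
    simp only [Set.mem_Iic] at this
    simp [Finset.mem_range]
    omega
  rw [finsum_eq_sum_of_support_subset _ hsub]
  have : ∑ p ∈ Finset.range (d + 1), altBinomSumRising d p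
      = (d ! : ℚ) * ∑ p ∈ Finset.range (d + 1), ((-1 : ℚ) ^ p * d.choose p) := by
    rw [Finset.mul_sum]
    refine Finset.sum_congr rfl fun p _ => ?_
    rw [altBinomSumRising_eq]
    ring
  rw [this]
  have halt := Int.alternating_sum_range_choose_of_ne (n := d) (by omega)
  have : ∑ p ∈ Finset.range (d + 1), ((-1 : ℚ) ^ p * d.choose p)
      = ((∑ p ∈ Finset.range (d + 1), ((-1 : ℤ) ^ p * d.choose p) : ℤ) : ℚ) := by
    push_cast
    rfl
  rw [this, halt]
  simp
end

section
/- For all integers j, ℓ ≥ 1, the identity ∑_{p=0}^{∞} ∑_{r=0}^{p} (-1)^r C(p,r) s(ℓr, ℓr - j) = S(ℓ+j, ℓ) holds, where s denotes unsigned Stirling numbers of the first kind and S denotes Stirling numbers of the second kind; all but finitely many terms of the outer sum are zero. -/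
/-!
The map `n ↦ s(n, n - j)` is a polynomial `P_j` of degree at most `2j`, built by
`P_0 = 1`, `P_{j+1}(x + 1) - P_{j+1}(x) = x P_j(x)`, `P_{j+1}(0) = 0`. Read forwards this
difference equation is the recurrence of `s`; read backwards from `x = j` it is the recurrence
of `S`, so `P_j(j - m) = S(m, m - j)`. For `F(x) = P_j(ℓx)` the inner sum is `(-1)^p Δ^p F(0)`,
which vanishes for `p > 2j`, and the partial sums `∑_{p ≤ d} (-1)^p Δ^p F(0)` telescope to
`F(-1) + (-1)^d Δ^{d+1} F(-1)`, so the whole sum is `F(-1) = P_j(-ℓ) = S(ℓ + j, ℓ)`.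
-/

/-- Unsigned Stirling numbers of the first kind. -/
def stirling1 : ℕ → ℕ → ℕ
  | 0, 0 => 1
  | 0, _+1 => 0
  | _+1, 0 => 0
  | n+1, k+1 => stirling1 n k + n * stirling1 n (k+1)

/-- Stirling numbers of the second kind. -/
def stirling2 : ℕ → ℕ → ℕ
  | 0, 0 => 1
  | 0, _+1 => 0
  | _+1, 0 => 0
  | n+1, k+1 => stirling2 n k + (k+1) * stirling2 n (k+1)

/-- `s(n, n-j)` with the convention that it is `0` when `n - j < 0`. -/
def stirling1Shift (n j : ℕ) : ℤ :=
  if j ≤ n then (stirling1 n (n - j) : ℤ) else 0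

open Finset Polynomial fwdDiff

section fwdDiff

variable {M G : Type*} [AddCommGroup M] [AddCommGroup G]

theorem sum_neg_one_pow_smul_fwdDiff_iter (h : M) (f : M → G) (y : M) (d : ℕ) :
    ∑ p ∈ range (d + 1), (-1 : ℤ) ^ p • Δ_[h] ^[p] f y =
      f (y - h) + (-1 : ℤ) ^ d • Δ_[h] ^[d + 1] f (y - h) := by
  induction d generalizing f with
  | zero => simp [fwdDiff]
  | succ d ih =>
    have hΔ : Δ_[h] f (y - h) = f y - f (y - h) := by simp [fwdDiff]
    rw [sum_range_succ', pow_zero, one_smul]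
    simp only [pow_succ', mul_smul, ← smul_sum, Function.iterate_succ_apply, ih, hΔ,
      Function.iterate_zero_apply]
    module

theorem neg_one_pow_smul_fwdDiff_iter_eq_sum_shift (h : M) (f : M → G) (y : M) (p : ℕ) :
    (-1 : ℤ) ^ p • Δ_[h] ^[p] f y =
      ∑ r ∈ range (p + 1), ((-1 : ℤ) ^ r * p.choose r) • f (y + r • h) := by
  rw [fwdDiff_iter_eq_sum_shift, smul_sum]
  refine sum_congr rfl fun r _ => ?_
  have hsign : (-1 : ℤ) ^ p * (-1) ^ (p - r) = (-1) ^ r := by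
    rw [← pow_add, show p + (p - r) = r + 2 * (p - r) by grind, pow_add, pow_mul]
    simp
  rw [smul_smul, ← mul_assoc, hsign]

end fwdDiff

namespace Polynomial

variable {R : Type*} [CommRing R]

theorem sum_range_neg_one_pow_mul_choose_mul_eval_eq_fwdDiff_iter (F : R[X]) (p : ℕ) :
    ∑ r ∈ range (p + 1), (-1) ^ r * p.choose r * F.eval (r : R) =
      (-1 : ℤ) ^ p • Δ_[1] ^[p] F.eval 0 := by
  rw [neg_one_pow_smul_fwdDiff_iter_eq_sum_shift]
  refine sum_congr rfl fun r _ => ?_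
  simp [zsmul_eq_mul]

theorem sum_range_neg_one_pow_mul_choose_mul_eval_eq_zero (F : R[X]) {p : ℕ}
    (hp : F.natDegree < p) :
    ∑ r ∈ range (p + 1), (-1) ^ r * p.choose r * F.eval (r : R) = 0 := by
  rw [sum_range_neg_one_pow_mul_choose_mul_eval_eq_fwdDiff_iter,
    fwdDiff_iter_eq_zero_of_degree_lt hp, Pi.zero_apply, smul_zero]

theorem sum_range_sum_range_neg_one_pow_mul_choose_mul_eval_eq_eval_neg_one (F : R[X]) {d : ℕ}
    (hd : F.natDegree ≤ d) :
    ∑ p ∈ range (d + 1), ∑ r ∈ range (p + 1), (-1) ^ r * p.choose r * F.eval (r : R) =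
      F.eval (-1) := by
  simp only [sum_range_neg_one_pow_mul_choose_mul_eval_eq_fwdDiff_iter,
    sum_neg_one_pow_smul_fwdDiff_iter, fwdDiff_iter_eq_zero_of_degree_lt (Nat.lt_succ_of_le hd),
    Pi.zero_apply, smul_zero, add_zero, zero_sub]

theorem natDegree_bernoulli_le (n : ℕ) : (bernoulli n).natDegree ≤ n :=
  natDegree_le_iff_coeff_eq_zero.mpr fun i hi => by
    rw [coeff_bernoulli, if_neg (not_le.mpr hi)]

/-- An antidifference of `g`, from `B_{k+1}(x + 1) - B_{k+1}(x) = (k + 1) x^k`. -/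
noncomputable def antidiff (g : ℚ[X]) : ℚ[X] :=
  g.sum fun k c => C (c / (k + 1)) * (bernoulli (k + 1) - C (_root_.bernoulli (k + 1)))

theorem antidiff_eval_zero (g : ℚ[X]) : (antidiff g).eval 0 = 0 := by
  rw [antidiff, eval_sum]
  simp [sum_def, bernoulli_eval_zero]

theorem fwdDiff_eval_antidiff (g : ℚ[X]) : Δ_[1] (antidiff g).eval = g.eval := by
  ext x
  rw [fwdDiff, antidiff, eval_sum, eval_sum, eval_eq_sum, sum_def, sum_def, sum_def,
    ← sum_sub_distrib]
  refine sum_congr rfl fun k _ => ?_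
  simp only [eval_mul, eval_C, eval_sub, add_comm x 1, bernoulli_eval_one_add]
  push_cast
  field_simp
  ring

theorem natDegree_antidiff_le (g : ℚ[X]) : (antidiff g).natDegree ≤ g.natDegree + 1 := by
  refine natDegree_sum_le_of_forall_le _ _ fun k hk => ?_
  calc _ ≤ (bernoulli (k + 1) - C (_root_.bernoulli (k + 1))).natDegree :=
        natDegree_C_mul_le _ _
    _ ≤ k + 1 := natDegree_sub_C.le.trans (natDegree_bernoulli_le _)
    _ ≤ g.natDegree + 1 := Nat.add_le_add_right (le_natDegree_of_mem_supp k hk) 1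

end Polynomial

theorem stirling1_eq_stirlingFirst : stirling1 = Nat.stirlingFirst := by
  ext n k
  induction n generalizing k with
  | zero => cases k <;> rfl
  | succ n ih => cases k <;> simp [stirling1, Nat.stirlingFirst, ih, add_comm]

theorem stirling2_eq_stirlingSecond : stirling2 = Nat.stirlingSecond := by
  ext n k
  induction n generalizing k with
  | zero => cases k <;> rfl
  | succ n ih => cases k <;> simp [stirling2, Nat.stirlingSecond, ih, add_comm]

def stirling2Shift (m j : ℕ) : ℤ :=
  if j ≤ m then (stirling2 m (m - j) : ℤ) else 0

theorem stirling1Shift_succ_succ (n j : ℕ) :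
    stirling1Shift (n + 1) (j + 1) = stirling1Shift n (j + 1) + n * stirling1Shift n j := by
  rcases Nat.lt_or_ge n j with h | h
  · simp [stirling1Shift, Nat.not_le_of_lt h, show ¬ j + 1 ≤ n by omega]
  obtain ⟨k, rfl⟩ := Nat.exists_eq_add_of_le h
  rcases k with _ | k
  · rcases j with _ | j <;> simp [stirling1Shift, stirling1_eq_stirlingFirst]
  · simp [stirling1Shift, stirling1_eq_stirlingFirst, Nat.stirlingFirst_succ_succ,
      show j + (k + 1) + 1 - (j + 1) = k + 1 by omega, show j + (k + 1) - (j + 1) = k by omega]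
    ring

theorem stirling2Shift_succ_succ (m j : ℕ) :
    stirling2Shift (m + 1) (j + 1) =
      stirling2Shift m (j + 1) + ((m : ℤ) - j) * stirling2Shift m j := by
  rcases Nat.lt_or_ge m j with h | h
  · simp [stirling2Shift, Nat.not_le_of_lt h, show ¬ j + 1 ≤ m by omega]
  obtain ⟨k, rfl⟩ := Nat.exists_eq_add_of_le h
  rcases k with _ | k
  · rcases j with _ | j <;> simp [stirling2Shift, stirling2_eq_stirlingSecond]
  · simp [stirling2Shift, stirling2_eq_stirlingSecond, Nat.stirlingSecond_succ_succ,
      show j + (k + 1) + 1 - (j + 1) = k + 1 by omega, show j + (k + 1) - (j + 1) = k by omega]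
    ring

noncomputable def stirlingPoly : ℕ → ℚ[X]
  | 0 => 1
  | j + 1 => antidiff (X * stirlingPoly j)

theorem natDegree_stirlingPoly_le (j : ℕ) : (stirlingPoly j).natDegree ≤ 2 * j := by
  induction j with
  | zero => simp [stirlingPoly]
  | succ j ih =>
    calc (stirlingPoly (j + 1)).natDegree ≤ (X * stirlingPoly j).natDegree + 1 :=
          natDegree_antidiff_le _
      _ ≤ 2 * (j + 1) := by
          have := natDegree_mul_le (p := (X : ℚ[X])) (q := stirlingPoly j)
          rw [natDegree_X] at this
          omega

theorem stirlingPoly_succ_eval_add_one (j : ℕ) (x : ℚ) :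
    (stirlingPoly (j + 1)).eval (x + 1) =
      (stirlingPoly (j + 1)).eval x + x * (stirlingPoly j).eval x := by
  have := congrFun (fwdDiff_eval_antidiff (X * stirlingPoly j)) x
  rw [fwdDiff, eval_mul, eval_X] at this
  rw [stirlingPoly, ← this]
  ring

theorem stirlingPoly_eval_natCast (j n : ℕ) :
    (stirlingPoly j).eval (n : ℚ) = stirling1Shift n j := by
  induction j generalizing n with
  | zero =>
    simp [stirlingPoly, stirling1Shift, stirling1_eq_stirlingFirst, Nat.stirlingFirst_self]
  | succ j ih =>
    induction n with
    | zero => simp [stirlingPoly, antidiff_eval_zero, stirling1Shift]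
    | succ n ihn =>
      rw [Nat.cast_succ, stirlingPoly_succ_eval_add_one, ihn, ih, stirling1Shift_succ_succ]
      push_cast
      ring

theorem stirlingPoly_eval_sub_natCast (j m : ℕ) :
    (stirlingPoly j).eval ((j : ℚ) - m) = stirling2Shift m j := by
  induction j generalizing m with
  | zero =>
    simp [stirlingPoly, stirling2Shift, stirling2_eq_stirlingSecond, Nat.stirlingSecond_self]
  | succ j ih =>
    induction m with
    | zero =>
      rw [Nat.cast_zero, sub_zero, stirlingPoly_eval_natCast]
      simp [stirling1Shift, stirling2Shift, stirling1_eq_stirlingFirst]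
    | succ m ihm =>
      have hstep := stirlingPoly_succ_eval_add_one j ((j : ℚ) - m)
      rw [show (j : ℚ) - m + 1 = ((j + 1 : ℕ) : ℚ) - m by push_cast; ring, ihm, ih] at hstep
      rw [show ((j + 1 : ℕ) : ℚ) - (m + 1 : ℕ) = (j : ℚ) - m by push_cast; ring,
        stirling2Shift_succ_succ]
      push_cast
      linarith

theorem altBinomSum_stirling1_eq_stirling2_general (j ℓ : ℕ) :
    (Function.support (fun p : ℕ =>
        ∑ r ∈ Finset.range (p + 1),
          (-1 : ℤ) ^ r * (p.choose r) * stirling1Shift (ℓ * r) j)).Finite ∧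
      ∑ᶠ p : ℕ, (∑ r ∈ Finset.range (p + 1),
          (-1 : ℤ) ^ r * (p.choose r) * stirling1Shift (ℓ * r) j) =
        (stirling2 (ℓ + j) ℓ : ℤ) := by
  set a : ℕ → ℤ := fun p =>
    ∑ r ∈ range (p + 1), (-1 : ℤ) ^ r * p.choose r * stirling1Shift (ℓ * r) j
  set F : ℚ[X] := (stirlingPoly j).comp (C (ℓ : ℚ) * X)
  have hF : F.natDegree ≤ 2 * j := natDegree_comp_le.trans <| by
    simpa using Nat.mul_le_mul (natDegree_stirlingPoly_le j)
      ((natDegree_C_mul_le (ℓ : ℚ) X).trans natDegree_X_le)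
  have hcast (p : ℕ) :
      (a p : ℚ) = ∑ r ∈ range (p + 1), (-1) ^ r * p.choose r * F.eval (r : ℚ) := by
    simp [a, F, eval_comp, ← stirlingPoly_eval_natCast]
  have hsupp : a.support ⊆ range (2 * j + 1) := by
    intro p hp
    by_contra hp'
    refine hp (Int.cast_injective (α := ℚ) ?_)
    rw [hcast, Int.cast_zero]
    exact F.sum_range_neg_one_pow_mul_choose_mul_eval_eq_zero (by simp at hp'; omega)
  have hF_eval : F.eval (-1) = stirling2Shift (ℓ + j) j := by
    rw [← stirlingPoly_eval_sub_natCast]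
    simp [F, eval_comp]
  refine ⟨(range (2 * j + 1)).finite_toSet.subset hsupp, Int.cast_injective (α := ℚ) ?_⟩
  rw [finsum_eq_sum_of_support_subset a hsupp, Int.cast_sum]
  simp only [hcast]
  rw [F.sum_range_sum_range_neg_one_pow_mul_choose_mul_eval_eq_eval_neg_one hF, hF_eval,
    stirling2Shift, if_pos (Nat.le_add_left j ℓ), Nat.add_sub_cancel]

/-- For `j, ℓ ≥ 1`,
`∑_{p≥0} ∑_{r=0}^p (-1)^r C(p,r) s(ℓr, ℓr-j) = S(ℓ+j, ℓ)`, where all but finitely many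
outer summands vanish; here `s` (resp. `S`) is the unsigned Stirling number of the first
(resp. second) kind. -/
theorem altBinomSum_stirling1_eq_stirling2 (j ℓ : ℕ) (hj : 1 ≤ j) (hℓ : 1 ≤ ℓ) :
    (Function.support (fun p : ℕ =>
        ∑ r ∈ Finset.range (p + 1),
          (-1 : ℤ) ^ r * (p.choose r) * stirling1Shift (ℓ * r) j)).Finite ∧
      ∑ᶠ p : ℕ, (∑ r ∈ Finset.range (p + 1),
          (-1 : ℤ) ^ r * (p.choose r) * stirling1Shift (ℓ * r) j) =
        (stirling2 (ℓ + j) ℓ : ℤ) :=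
  altBinomSum_stirling1_eq_stirling2_general j ℓ
end

section
/- For every fixed natural number n, the function x ↦ s(x, x-n), extended via the identity s(x, x-n) = ∑_{i=0}^{n} ⟨⟨n⟩⟩_i · C(x+i, 2n), is a polynomial in x of degree at most 2n, where ⟨⟨n⟩⟩_i are the second-order Eulerian numbers; in particular, for every natural number j, there exists a polynomial q of degree at most 2j such that q(m) = s(m, m-j) for all natural numbers m ≥ j. -/
open Polynomial

/-- Second-order Eulerian numbers `⟨⟨n⟩⟩_i`, defined by
`⟨⟨n⟩⟩_i = (i+1)⟨⟨n-1⟩⟩_i + (2n-1-i)⟨⟨n-1⟩⟩_{i-1}`, `⟨⟨0⟩⟩_0 = 1`. -/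
def eulerian2 : ℕ → ℕ → ℕ
  | 0, 0 => 1
  | 0, _+1 => 0
  | n+1, 0 => eulerian2 n 0
  | n+1, i+1 => (i+2) * eulerian2 n (i+1) + (2*(n+1) - 1 - (i+1)) * eulerian2 n i

/-- The polynomial binomial coefficient `C(X+i, m) = (X+i)(X+i-1)⋯(X+i-m+1)/m!`. -/
noncomputable def binomPoly (i m : ℕ) : Polynomial ℚ :=
  Polynomial.C ((m.factorial : ℚ))⁻¹ * ∏ t ∈ Finset.range m, (X + Polynomial.C (i : ℚ) - Polynomial.C (t : ℚ))

/-- The polynomial extension `x ↦ s(x, x-n) = ∑_{i=0}^n ⟨⟨n⟩⟩_i C(x+i, 2n)` of the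
unsigned Stirling numbers of the first kind. -/
noncomputable def stirling1Poly (n : ℕ) : Polynomial ℚ :=
  ∑ i ∈ Finset.range (n + 1), Polynomial.C ((eulerian2 n i : ℚ)) * binomPoly i (2 * n)

open Finset

lemma stirling1_above (m k : ℕ) (h : m < k) : stirling1 m k = 0 := by
  induction m generalizing k with
  | zero => cases k with | zero => omega | succ k => rfl
  | succ m ih =>
    cases k with
    | zero => omega
    | succ k => simp [stirling1, ih k (by omega), ih (k+1) (by omega)]

lemma eulerian2_above (n i : ℕ) (h : n ≤ i) : eulerian2 (n+1) (i+1) = 0 := by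
  induction n generalizing i with
  | zero =>
    show (i+2) * eulerian2 0 (i+1) + (2*1 - 1 - (i+1)) * eulerian2 0 i = 0
    cases i <;> simp [eulerian2]
  | succ n ih =>
    obtain ⟨j, rfl⟩ : ∃ j, i = j + 1 := ⟨i - 1, by omega⟩
    show (j+2+1) * eulerian2 (n+1) (j+1+1) + _ * eulerian2 (n+1) (j+1) = 0
    rw [ih (j+1) (by omega), ih j (by omega)]
    ring

lemma stirling1_self (m : ℕ) : stirling1 m m = 1 := by
  induction m with
  | zero => rfl
  | succ m ih => simp [stirling1, ih, stirling1_above m (m+1) (by omega)]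

lemma binomPoly_eval (i M : ℕ) (x : ℚ) :
    (binomPoly i M).eval x = ((M.factorial : ℚ))⁻¹ * ∏ t ∈ range M, (x + i - t) := by
  simp [binomPoly, eval_prod]

lemma binomPoly_pascal (i M : ℕ) (x : ℚ) :
    (binomPoly i (M+1)).eval (x+1) = (binomPoly i (M+1)).eval x + (binomPoly i M).eval x := by
  have hM : ((M.factorial : ℚ)) ≠ 0 := Nat.cast_ne_zero.mpr (Nat.factorial_ne_zero M)
  rw [binomPoly_eval, binomPoly_eval, binomPoly_eval,
    Finset.prod_range_succ' (fun t => x + 1 + (i:ℚ) - t), Finset.prod_range_succ]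
  have h1 : ∀ t ∈ range M, x + 1 + (i:ℚ) - ((t:ℕ)+1 : ℕ) = x + i - t := by
    intro t _; push_cast; ring
  rw [Finset.prod_congr rfl h1, Nat.factorial_succ]
  push_cast
  set Q := ∏ t ∈ range M, (x + (i:ℚ) - t) with hQ
  field_simp
  ring

lemma binomPoly_mul (i M : ℕ) (h : i ≤ M) (x : ℚ) :
    x * (binomPoly i M).eval x =
      ((i:ℚ)+1) * (binomPoly i (M+1)).eval x + ((M - i : ℕ) : ℚ) * (binomPoly (i+1) (M+1)).eval x := by
  have hM : ((M.factorial : ℚ)) ≠ 0 := Nat.cast_ne_zero.mpr (Nat.factorial_ne_zero M)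
  rw [binomPoly_eval, binomPoly_eval, binomPoly_eval,
    Finset.prod_range_succ' (fun t => x + ((i:ℕ)+1 : ℕ) - t), Finset.prod_range_succ]
  have h1 : ∀ t ∈ range M, x + (((i:ℕ)+1 : ℕ) : ℚ) - ((t:ℕ)+1 : ℕ) = x + i - t := by
    intro t _; push_cast; ring
  rw [Finset.prod_congr rfl h1, Nat.factorial_succ]
  have h2 : ((M - i : ℕ) : ℚ) = (M : ℚ) - i := by
    have := Nat.cast_sub h (R := ℚ); exact this
  rw [h2]
  push_cast
  set Q := ∏ t ∈ range M, (x + (i:ℚ) - t) with hQ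
  field_simp
  ring

lemma eulerian2_succ_self (k : ℕ) : eulerian2 k (k+1) = 0 := by
  cases k with
  | zero => rfl
  | succ m => exact eulerian2_above m (m+1) (by omega)

lemma eulerian2_succ_succ (k i : ℕ) :
    (eulerian2 (k+1) (i+1) : ℚ) = ((i:ℚ)+2) * eulerian2 k (i+1) + ((2*k - i : ℕ):ℚ) * eulerian2 k i := by
  show (((i+2) * eulerian2 k (i+1) + (2*(k+1) - 1 - (i+1)) * eulerian2 k i : ℕ) : ℚ) = _
  have h : 2*(k+1) - 1 - (i+1) = 2*k - i := by omega
  rw [h]; push_cast; ring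

lemma key_sum (k : ℕ) (B : ℕ → ℚ) :
    ∑ i ∈ range (k+2), (eulerian2 (k+1) i : ℚ) * B i =
    ∑ i ∈ range (k+1), (eulerian2 k i : ℚ) * (((i:ℚ)+1) * B i + ((2*k - i : ℕ) : ℚ) * B (i+1)) := by
  rw [Finset.sum_range_succ' (fun i => (eulerian2 (k+1) i : ℚ) * B i) (k+1)]
  simp only [eulerian2_succ_succ]
  have h0 : (eulerian2 (k+1) 0 : ℚ) = eulerian2 k 0 := rfl
  rw [h0]
  have hsplit : ∀ i ∈ range (k+1),
      (((i:ℚ)+2) * eulerian2 k (i+1) + ((2*k - i : ℕ):ℚ) * eulerian2 k i) * B (i+1)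
      = ((i:ℚ)+2) * (eulerian2 k (i+1):ℚ) * B (i+1) + ((2*k - i : ℕ):ℚ) * (eulerian2 k i:ℚ) * B (i+1) := by
    intro i _; ring
  rw [Finset.sum_congr rfl hsplit, Finset.sum_add_distrib]
  have hrhs : ∀ i ∈ range (k+1),
      (eulerian2 k i : ℚ) * (((i:ℚ)+1) * B i + ((2*k - i : ℕ) : ℚ) * B (i+1))
      = ((i:ℚ)+1) * (eulerian2 k i:ℚ) * B i + ((2*k - i : ℕ):ℚ) * (eulerian2 k i:ℚ) * B (i+1) := by
    intro i _; ring
  rw [Finset.sum_congr rfl hrhs, Finset.sum_add_distrib,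
    Finset.sum_range_succ' (fun i => ((i:ℚ)+1) * (eulerian2 k i:ℚ) * B i) k,
    Finset.sum_range_succ (fun i => ((i:ℚ)+2) * (eulerian2 k (i+1):ℚ) * B (i+1)) k,
    eulerian2_succ_self k]
  have hcongr : ∀ i ∈ range k,
      (((i+1 : ℕ):ℚ)+1) * (eulerian2 k (i+1):ℚ) * B (i+1) = ((i:ℚ)+2) * (eulerian2 k (i+1):ℚ) * B (i+1) := by
    intro i _; push_cast; ring
  rw [Finset.sum_congr rfl hcongr]
  push_cast
  ring

lemma stirling1Poly_rec (k : ℕ) (x : ℚ) :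
    (stirling1Poly (k+1)).eval (x+1) = (stirling1Poly (k+1)).eval x + x * (stirling1Poly k).eval x := by
  have h2 : 2 * (k+1) = (2*k+1) + 1 := by ring
  simp only [stirling1Poly, eval_finset_sum, eval_mul, eval_C, h2]
  have hL : ∀ i ∈ range (k+1+1),
      (eulerian2 (k+1) i : ℚ) * (binomPoly i ((2*k+1)+1)).eval (x+1)
      = (eulerian2 (k+1) i : ℚ) * (binomPoly i ((2*k+1)+1)).eval x
        + (eulerian2 (k+1) i : ℚ) * (binomPoly i (2*k+1)).eval x := by
    intro i _; rw [binomPoly_pascal]; ring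
  rw [Finset.sum_congr rfl hL, Finset.sum_add_distrib, Finset.mul_sum]
  congr 1
  have hR : ∀ i ∈ range (k+1),
      x * ((eulerian2 k i : ℚ) * (binomPoly i (2*k)).eval x)
      = (eulerian2 k i : ℚ) * (((i:ℚ)+1) * (binomPoly i (2*k+1)).eval x
          + ((2*k - i : ℕ):ℚ) * (binomPoly (i+1) (2*k+1)).eval x) := by
    intro i hi
    have hik : i ≤ 2*k := by have := Finset.mem_range.mp hi; omega
    calc x * ((eulerian2 k i : ℚ) * (binomPoly i (2*k)).eval x)
        = (eulerian2 k i : ℚ) * (x * (binomPoly i (2*k)).eval x) := by ring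
      _ = _ := by rw [binomPoly_mul i (2*k) hik x]
  rw [Finset.sum_congr rfl hR]
  exact key_sum k (fun i => (binomPoly i (2*k+1)).eval x)

lemma prod_self_factorial (M : ℕ) : ∏ t ∈ range M, ((M:ℚ) - t) = M.factorial := by
  induction M with
  | zero => simp
  | succ M ih =>
    rw [Finset.prod_range_succ' (fun t => ((M+1:ℕ):ℚ) - t)]
    have h1 : ∀ t ∈ range M, ((M+1:ℕ):ℚ) - ((t:ℕ)+1:ℕ) = (M:ℚ) - t := by
      intro t _; push_cast; ring
    rw [Finset.prod_congr rfl h1, ih, Nat.factorial_succ]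
    push_cast; ring

lemma stirling1Poly_eval_self (n : ℕ) : (stirling1Poly n).eval (n:ℚ) = eulerian2 n n := by
  simp only [stirling1Poly, eval_finset_sum, eval_mul, eval_C, binomPoly_eval]
  rw [Finset.sum_range_succ]
  have h0 : ∀ i ∈ range n,
      (eulerian2 n i:ℚ) * ((((2*n).factorial:ℚ))⁻¹ * ∏ t ∈ range (2*n), ((n:ℚ) + i - t)) = 0 := by
    intro i hi
    have hi' := Finset.mem_range.mp hi
    have hz : ∏ t ∈ range (2*n), ((n:ℚ) + i - t) = 0 := by
      apply Finset.prod_eq_zero (Finset.mem_range.mpr (show n + i < 2*n by omega))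
      push_cast; ring
    rw [hz]; ring
  rw [Finset.sum_eq_zero h0, zero_add]
  have h1 : ∀ t ∈ range (2*n), (n:ℚ) + n - t = ((2*n:ℕ):ℚ) - t := by
    intro t _; push_cast; ring
  rw [Finset.prod_congr rfl h1, prod_self_factorial]
  have : (((2*n).factorial:ℚ)) ≠ 0 := Nat.cast_ne_zero.mpr (Nat.factorial_ne_zero _)
  field_simp

lemma stirling1Poly_eval_zero (x : ℚ) : (stirling1Poly 0).eval x = 1 := by
  simp [stirling1Poly, binomPoly, eulerian2]

lemma stirling1Poly_eval (m n : ℕ) (h : n ≤ m) :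
    (stirling1Poly n).eval (m:ℚ) = stirling1 m (m - n) := by
  induction m generalizing n with
  | zero =>
    interval_cases n
    simp [stirling1Poly_eval_zero, stirling1]
  | succ m ih =>
    cases n with
    | zero => simp [stirling1Poly_eval_zero, stirling1_self]
    | succ k =>
      rcases Nat.lt_or_ge k m with hk | hk
      · have hcast : ((m+1:ℕ):ℚ) = (m:ℚ) + 1 := by push_cast; ring
        rw [hcast, stirling1Poly_rec k (m:ℚ), ih (k+1) (by omega), ih k (by omega)]
        have e1 : m - k = (m - (k+1)) + 1 := by omega
        have e2 : m + 1 - (k+1) = (m - (k+1)) + 1 := by omega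
        rw [e1, e2]
        show _ = ((stirling1 m (m-(k+1)) + m * stirling1 m ((m-(k+1))+1) : ℕ) : ℚ)
        push_cast; ring
      · have hkm : k = m := by omega
        subst hkm
        rw [stirling1Poly_eval_self (k+1), eulerian2_above k k le_rfl]
        simp [Nat.sub_self, stirling1]

lemma binomPoly_degree (i M : ℕ) : (binomPoly i M).degree ≤ M := by
  unfold binomPoly
  refine le_trans (degree_mul_le _ _) ?_
  have h2 : (∏ t ∈ range M, (X + C (i:ℚ) - C (t:ℚ))).degree ≤ (M : WithBot ℕ) := by
    refine le_trans (degree_prod_le _ _) ?_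
    have hb : ∀ t ∈ range M, (X + C (i:ℚ) - C (t:ℚ)).degree = 1 := by
      intro t _
      have he : (X + C (i:ℚ) - C (t:ℚ)) = X + C ((i:ℚ) - t) := by
        rw [C_sub]; ring
      rw [he, degree_X_add_C]
    calc ∑ t ∈ range M, (X + C (i:ℚ) - C (t:ℚ)).degree
        = ∑ _t ∈ range M, (1 : WithBot ℕ) := Finset.sum_congr rfl hb
      _ ≤ (M : WithBot ℕ) := by
        rw [Finset.sum_const, Finset.card_range]
        simp [nsmul_eq_mul]
  calc (C ((M.factorial:ℚ))⁻¹).degree + (∏ t ∈ range M, (X + C (i:ℚ) - C (t:ℚ))).degree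
      ≤ 0 + (M : WithBot ℕ) := add_le_add degree_C_le h2
    _ = M := by simp

lemma stirling1Poly_degree (n : ℕ) : (stirling1Poly n).degree ≤ (2*n : ℕ) := by
  refine le_trans (degree_sum_le _ _) ?_
  refine Finset.sup_le fun i _ => ?_
  refine le_trans (degree_mul_le _ _) ?_
  calc (C ((eulerian2 n i:ℚ))).degree + (binomPoly i (2*n)).degree
      ≤ 0 + ((2*n : ℕ) : WithBot ℕ) := add_le_add degree_C_le (binomPoly_degree _ _)
    _ = ((2*n : ℕ) : WithBot ℕ) := by simp


/-- For every `n`, the polynomial `∑_{i=0}^n ⟨⟨n⟩⟩_i C(x+i, 2n)` has degree at most `2n`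
and extends `m ↦ s(m, m-n)`; in particular, for every `j` there is a polynomial `q` of
degree at most `2j` with `q(m) = s(m, m-j)` for all `m ≥ j`. -/
theorem stirling1Poly_spec (n : ℕ) :
    ((stirling1Poly n).degree ≤ 2 * n ∧
      ∀ m : ℕ, n ≤ m → (stirling1Poly n).eval (m : ℚ) = stirling1 m (m - n)) ∧
    ∀ j : ℕ, ∃ q : Polynomial ℚ, q.degree ≤ 2 * j ∧
      ∀ m : ℕ, j ≤ m → q.eval (m : ℚ) = stirling1 m (m - j) := by
  have hdeg : ∀ j : ℕ, (stirling1Poly j).degree ≤ 2 * (j : WithBot ℕ) := by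
    intro j
    have h := stirling1Poly_degree j
    rwa [Nat.cast_mul, Nat.cast_ofNat] at h
  exact ⟨⟨hdeg n, fun m hm => stirling1Poly_eval m n hm⟩,
    fun j => ⟨stirling1Poly j, hdeg j, fun m hm => stirling1Poly_eval m j hm⟩⟩
end

section
/- Let ℓ ≥ 1 and N ≥ 4. Define f(x) = 1/((1-x^{N-1})(1-2x^{N-1})⋯(1-ℓ x^{N-1})) - 1/(1-x^{N-1})^ℓ as a formal power series. Then the coefficients a_n of f satisfy: for ℓ ≥ 2, limsup_n a_n^{1/n} = ℓ^{1/(N-1)} > 1, i.e., the coefficients grow exponentially with rate ℓ^{1/(N-1)}. -/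
/-!
Substituting `y = x^(N-1)` writes `f` as the expansion of
`g(y) = ∏ᵢ (1 - (i+1) y)⁻¹ - (1 - y)^(-ℓ)`, so the coefficients of `f` vanish off the multiples of
`N - 1` and `a_{(N-1)j}` is the `j`-th coefficient of `g`. Expanding each factor as a geometric
series, this coefficient is a sum over the compositions `l` of `j` into `ℓ` parts of
`∏ᵢ (i+1)^{lᵢ} - 1`. Every summand is nonnegative, the composition `j e_ℓ` alone contributes
`ℓ^j - 1`, and there are at most `(j+1)^ℓ` compositions, each contributing at most `ℓ^j`. Hence
`ℓ^j - 1 ≤ a_{(N-1)j} ≤ (j+1)^ℓ ℓ^j`, and taking `((N-1)j)`-th roots gives the limsup.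
-/

open PowerSeries Filter Finset Topology

namespace PowerSeries

variable {k : Type*} [Field k]

theorem expand_inv (p : ℕ) (hp : p ≠ 0) (φ : k⟦X⟧) :
    expand p hp φ⁻¹ = (expand p hp φ)⁻¹ := by
  by_cases h : constantCoeff φ = 0
  · rw [inv_eq_zero.2 h, map_zero, eq_comm, inv_eq_zero, constantCoeff_expand, h]
  · rw [eq_inv_iff_mul_eq_one (by rwa [constantCoeff_expand]), ← map_mul,
      PowerSeries.inv_mul_cancel _ h, map_one]

theorem inv_one_sub_C_mul_X (a : k) : (1 - C a * X)⁻¹ = mk (a ^ ·) := by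
  rw [inv_eq_iff_mul_eq_one (by simp)]
  simpa [rescale_mk, rescale_X] using congrArg (rescale a) (mk_one_mul_one_sub_eq_one (S := k))

theorem inv_prod {ι : Type*} (s : Finset ι) (φ : ι → k⟦X⟧) :
    (∏ i ∈ s, φ i)⁻¹ = ∏ i ∈ s, (φ i)⁻¹ := by
  classical
  induction s using Finset.induction_on with
  | empty => simp
  | insert i s hi ih => rw [prod_insert hi, prod_insert hi, PowerSeries.mul_inv_rev, ih, mul_comm]

theorem coeff_inv_prod_one_sub_C_mul_X {ι : Type*} [DecidableEq ι] (s : Finset ι) (c : ι → k)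
    (n : ℕ) :
    coeff n (∏ i ∈ s, (1 - C (c i) * X))⁻¹ = ∑ l ∈ s.finsuppAntidiag n, ∏ i ∈ s, c i ^ l i := by
  simp [inv_prod, inv_one_sub_C_mul_X, coeff_prod]

end PowerSeries

theorem Finset.card_finsuppAntidiag_le {ι : Type*} [DecidableEq ι] (s : Finset ι) (n : ℕ) :
    #(s.finsuppAntidiag n) ≤ (n + 1) ^ #s := by
  calc #(s.finsuppAntidiag n) ≤ #(s.finsupp fun _ ↦ range (n + 1)) := by
        refine card_le_card fun l hl ↦ ?_
        rw [mem_finsuppAntidiag] at hl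
        rw [mem_finsupp_iff]
        refine ⟨hl.2, fun i hi ↦ mem_range_succ_iff.2 ?_⟩
        exact hl.1 ▸ single_le_sum (fun _ _ ↦ Nat.zero_le _) hi
    _ = (n + 1) ^ #s := by simp [card_finsupp]

section Ordered

variable {k ι : Type*} [Field k] [LinearOrder k] [IsStrictOrderedRing k] [DecidableEq ι]
  {s : Finset ι}

theorem coeff_inv_prod_one_sub_C_mul_X_nonneg {c : ι → k} (hc : ∀ i ∈ s, 0 ≤ c i) (n : ℕ) :
    0 ≤ coeff n (∏ i ∈ s, (1 - C (c i) * X))⁻¹ := by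
  rw [coeff_inv_prod_one_sub_C_mul_X]
  exact sum_nonneg fun l _ ↦ prod_nonneg fun i hi ↦ pow_nonneg (hc i hi) _

theorem coeff_inv_prod_one_sub_C_mul_X_le {c : ι → k} {d : k} (hd : 0 ≤ d)
    (hc : ∀ i ∈ s, 0 ≤ c i) (hcd : ∀ i ∈ s, c i ≤ d) (n : ℕ) :
    coeff n (∏ i ∈ s, (1 - C (c i) * X))⁻¹ ≤ (n + 1) ^ #s * d ^ n := by
  rw [coeff_inv_prod_one_sub_C_mul_X]
  calc ∑ l ∈ s.finsuppAntidiag n, ∏ i ∈ s, c i ^ l i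
      ≤ ∑ l ∈ s.finsuppAntidiag n, d ^ n := by
        refine sum_le_sum fun l hl ↦ ?_
        rw [mem_finsuppAntidiag] at hl
        calc ∏ i ∈ s, c i ^ l i ≤ ∏ i ∈ s, d ^ l i :=
              prod_le_prod (fun i hi ↦ pow_nonneg (hc i hi) _)
                fun i hi ↦ pow_le_pow_left₀ (hc i hi) (hcd i hi) _
          _ = d ^ n := by rw [prod_pow_eq_pow_sum, hl.1]
    _ = #(s.finsuppAntidiag n) * d ^ n := by rw [sum_const, nsmul_eq_mul]
    _ ≤ (n + 1) ^ #s * d ^ n := by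
        gcongr
        exact_mod_cast card_finsuppAntidiag_le s n

theorem pow_sub_pow_le_coeff_inv_prod_sub {c d : ι → k} (hd : ∀ i ∈ s, 0 ≤ d i)
    (hdc : ∀ i ∈ s, d i ≤ c i) {i₀ : ι} (hi₀ : i₀ ∈ s) (n : ℕ) :
    c i₀ ^ n - d i₀ ^ n ≤
      coeff n ((∏ i ∈ s, (1 - C (c i) * X))⁻¹ - (∏ i ∈ s, (1 - C (d i) * X))⁻¹) := by
  have prod_single (e : ι → k) : ∏ i ∈ s, e i ^ Finsupp.single i₀ n i = e i₀ ^ n := by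
    simp [Finsupp.single_apply, pow_ite, hi₀]
  rw [map_sub, coeff_inv_prod_one_sub_C_mul_X, coeff_inv_prod_one_sub_C_mul_X,
    ← sum_sub_distrib, ← prod_single c, ← prod_single d]
  refine single_le_sum (f := fun l : ι →₀ ℕ ↦ ∏ i ∈ s, c i ^ l i - ∏ i ∈ s, d i ^ l i)
    (fun l _ ↦ sub_nonneg.2 ?_) ?_
  · exact prod_le_prod (fun i hi ↦ pow_nonneg (hd i hi) _)
      fun i hi ↦ pow_le_pow_left₀ (hd i hi) (hdc i hi) _
  · exact mem_finsuppAntidiag.2 ⟨by simp [Finsupp.single_apply, hi₀],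
      Finsupp.support_single_subset.trans (singleton_subset_iff.2 hi₀)⟩

end Ordered

/-- The series `f` of the theorem in the variable `y = x^(N-1)`. -/
noncomputable def eulerSeriesDiff (ℓ : ℕ) : ℚ⟦X⟧ :=
  (∏ i ∈ range ℓ, (1 - C ((i : ℚ) + 1) * X))⁻¹ - ((1 - X) ^ ℓ)⁻¹

theorem expand_eulerSeriesDiff (ℓ m : ℕ) (hm : m ≠ 0) :
    expand m hm (eulerSeriesDiff ℓ) =
      (∏ i ∈ range ℓ, (1 - C ((i : ℚ) + 1) * X ^ m))⁻¹ - ((1 - X ^ m) ^ ℓ)⁻¹ := by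
  simp [eulerSeriesDiff, expand_inv, map_prod]

theorem eulerSeriesDiff_eq_sub_inv_prod (ℓ : ℕ) :
    eulerSeriesDiff ℓ = (∏ i ∈ range ℓ, (1 - C ((i : ℚ) + 1) * X))⁻¹ -
      (∏ _i ∈ range ℓ, (1 - C (1 : ℚ) * X))⁻¹ := by
  simp [eulerSeriesDiff]

theorem pow_sub_one_le_coeff_eulerSeriesDiff {ℓ : ℕ} (hℓ : ℓ ≠ 0) (j : ℕ) :
    (ℓ : ℚ) ^ j - 1 ≤ coeff j (eulerSeriesDiff ℓ) := by
  have h := pow_sub_pow_le_coeff_inv_prod_sub (c := fun i : ℕ ↦ (i : ℚ) + 1) (d := fun _ ↦ 1)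
    (fun _ _ ↦ zero_le_one) (fun i _ ↦ by simp) (mem_range.2 (Nat.pred_lt hℓ)) j
  simpa [eulerSeriesDiff_eq_sub_inv_prod, Nat.cast_pred (Nat.pos_of_ne_zero hℓ)] using h

theorem coeff_eulerSeriesDiff_le (ℓ j : ℕ) :
    coeff j (eulerSeriesDiff ℓ) ≤ (j + 1) ^ ℓ * (ℓ : ℚ) ^ j := by
  have hA := coeff_inv_prod_one_sub_C_mul_X_le (s := range ℓ) (c := fun i : ℕ ↦ (i : ℚ) + 1)
    (d := ℓ) (by positivity) (fun _ _ ↦ by positivity)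
    (fun i hi ↦ by exact_mod_cast mem_range.1 hi) j
  have hB := coeff_inv_prod_one_sub_C_mul_X_nonneg (s := range ℓ) (c := fun _ ↦ (1 : ℚ))
    (fun _ _ ↦ zero_le_one) j
  rw [card_range] at hA
  rw [eulerSeriesDiff_eq_sub_inv_prod, map_sub]
  linarith

theorem abs_coeff_eulerSeriesDiff_le {ℓ : ℕ} (hℓ : ℓ ≠ 0) (j : ℕ) :
    |coeff j (eulerSeriesDiff ℓ)| ≤ (j + 1) ^ ℓ * (ℓ : ℚ) ^ j := by
  have h₀ : (0 : ℚ) ≤ (ℓ : ℚ) ^ j - 1 :=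
    sub_nonneg.2 (one_le_pow₀ (by exact_mod_cast Nat.one_le_iff_ne_zero.2 hℓ))
  rw [abs_of_nonneg (h₀.trans (pow_sub_one_le_coeff_eulerSeriesDiff hℓ j))]
  exact coeff_eulerSeriesDiff_le ℓ j

theorem pow_le_coeff_succ_eulerSeriesDiff {ℓ : ℕ} (hℓ : 2 ≤ ℓ) (j : ℕ) :
    (ℓ : ℚ) ^ j ≤ coeff (j + 1) (eulerSeriesDiff ℓ) := by
  have h₁ : (1 : ℚ) ≤ (ℓ : ℚ) ^ j := one_le_pow₀ (by exact_mod_cast (by omega : 1 ≤ ℓ))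
  have h₂ : (2 : ℚ) ≤ ℓ := by exact_mod_cast hℓ
  refine le_trans ?_ (pow_sub_one_le_coeff_eulerSeriesDiff (by omega) (j + 1))
  rw [pow_succ]
  nlinarith

theorem tendsto_natCast_add_one_rpow_div (k : ℝ) :
    Tendsto (fun n : ℕ ↦ ((n : ℝ) + 1) ^ (k / n)) atTop (𝓝 1) := by
  refine ((tendsto_rpow_div_mul_add k 1 (-1) zero_ne_one).comp
    (tendsto_atTop_add_const_right _ 1 tendsto_natCast_atTop_atTop)).congr fun n ↦ ?_
  simp

theorem tendsto_rpow_natCast_div_mul_add_one {b : ℝ} (hb : 0 < b) (m : ℕ) :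
    Tendsto (fun j : ℕ ↦ b ^ ((j : ℝ) / (m * (j + 1)))) atTop (𝓝 (b ^ (m : ℝ)⁻¹)) := by
  have h := ((Real.continuous_const_rpow hb.ne').tendsto _).comp
    ((tendsto_natCast_div_add_atTop (1 : ℝ)).div_const (m : ℝ))
  refine (h.congr fun j ↦ ?_).trans_eq ?_
  · simp only [Function.comp_apply, div_div, mul_comm]
  · simp

theorem limsup_abs_rpow_inv_eq_of_dvd {a : ℕ → ℝ} {m k : ℕ} {b : ℝ} (hm : 0 < m) (hb : 0 < b)
    (hzero : ∀ n, ¬ m ∣ n → a n = 0)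
    (hupper : ∀ j, |a (m * j)| ≤ ((m * j : ℕ) + 1 : ℝ) ^ k * b ^ j)
    (hlower : ∀ j, b ^ j ≤ |a (m * (j + 1))|) :
    limsup (fun n ↦ |a n| ^ (n : ℝ)⁻¹) atTop = b ^ (m : ℝ)⁻¹ := by
  set u := fun n : ℕ ↦ |a n| ^ (n : ℝ)⁻¹
  have hup : ∀ᶠ n in atTop, u n ≤ ((n : ℝ) + 1) ^ ((k : ℝ) / n) * b ^ (m : ℝ)⁻¹ := by
    filter_upwards [eventually_ne_atTop 0] with n hn
    by_cases hmn : m ∣ n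
    · obtain ⟨j, rfl⟩ := hmn
      have hj : (j : ℝ) ≠ 0 := by rintro h; simp_all
      calc u (m * j) ≤ ((((m * j : ℕ) : ℝ) + 1) ^ k * b ^ j) ^ ((m * j : ℕ) : ℝ)⁻¹ :=
            Real.rpow_le_rpow (abs_nonneg _) (hupper j) (by positivity)
        _ = _ := by
          rw [Real.mul_rpow (by positivity) (by positivity), ← Real.rpow_natCast,
            ← Real.rpow_natCast b, ← Real.rpow_mul (by positivity), ← Real.rpow_mul hb.le]
          congr 2
          push_cast
          field_simp
    · simp only [u, hzero n hmn, abs_zero, Real.zero_rpow (inv_ne_zero (Nat.cast_ne_zero.2 hn))]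
      positivity
  have hlo (j : ℕ) : b ^ ((j : ℝ) / (m * (j + 1))) ≤ u (m * (j + 1)) := by
    rw [show (j : ℝ) / (m * (j + 1)) = j * ((m * (j + 1) : ℕ) : ℝ)⁻¹ by push_cast; ring,
      Real.rpow_mul hb.le, Real.rpow_natCast]
    exact Real.rpow_le_rpow (by positivity) (hlower j) (by positivity)
  have hup_lim : Tendsto (fun n : ℕ ↦ ((n : ℝ) + 1) ^ ((k : ℝ) / n) * b ^ (m : ℝ)⁻¹) atTop
      (𝓝 (b ^ (m : ℝ)⁻¹)) := by
    simpa using (tendsto_natCast_add_one_rpow_div k).mul_const (b ^ (m : ℝ)⁻¹)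
  have hbdd : IsBoundedUnder (· ≤ ·) atTop u := hup_lim.isBoundedUnder_le.mono_le hup
  refine le_antisymm ?_ ?_
  · exact (limsup_le_limsup hup (isCoboundedUnder_le_of_le atTop fun n ↦ by positivity)
      hup_lim.isBoundedUnder_le).trans_eq hup_lim.limsup_eq
  · refine le_of_forall_lt_imp_le_of_dense fun c hc ↦ le_limsup_of_frequently_le ?_ hbdd
    have hφ : Tendsto (fun j ↦ m * (j + 1)) atTop atTop :=
      tendsto_atTop_mono (fun j ↦ Nat.le_mul_of_pos_left _ hm) (tendsto_add_atTop_nat 1)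
    exact hφ.frequently (((tendsto_rpow_natCast_div_mul_add_one hb m).eventually
      (lt_mem_nhds hc)).frequently.mono fun j hj ↦ hj.le.trans (hlo j))

/-- For `ℓ ≥ 2` and `N ≥ 4`, the coefficients `a_n` of the formal power series
`f(x) = 1/((1-x^{N-1})(1-2x^{N-1})⋯(1-ℓx^{N-1})) - 1/(1-x^{N-1})^ℓ`
grow exponentially with rate `ℓ^{1/(N-1)} > 1`, i.e. `limsup_n a_n^{1/n} = ℓ^{1/(N-1)}`. -/
theorem eulerSeries_coeff_exponential_growth (ℓ N : ℕ) (hℓ : 2 ≤ ℓ) (hN : 4 ≤ N)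
    (f : PowerSeries ℚ)
    (hf : f = (∏ i ∈ Finset.range ℓ,
          (1 - PowerSeries.C ((i : ℚ) + 1) * PowerSeries.X ^ (N - 1)))⁻¹ -
        ((1 - PowerSeries.X ^ (N - 1) : PowerSeries ℚ) ^ ℓ)⁻¹) :
    Filter.limsup (fun n : ℕ => (|(PowerSeries.coeff n f : ℚ)| : ℝ) ^ ((n : ℝ)⁻¹)) atTop =
        (ℓ : ℝ) ^ (((N : ℝ) - 1)⁻¹) ∧
      (1 : ℝ) < (ℓ : ℝ) ^ (((N : ℝ) - 1)⁻¹) := by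
  have hm : N - 1 ≠ 0 := by omega
  have hfg : f = expand (N - 1) hm (eulerSeriesDiff ℓ) :=
    hf.trans (expand_eulerSeriesDiff ℓ _ hm).symm
  have hN₁ : (N : ℝ) - 1 = ((N - 1 : ℕ) : ℝ) := by push_cast [show 1 ≤ N by omega]; ring
  rw [hN₁]
  refine ⟨limsup_abs_rpow_inv_eq_of_dvd (k := ℓ) (Nat.pos_of_ne_zero hm) (by positivity) ?_ ?_ ?_,
    Real.one_lt_rpow (by exact_mod_cast hℓ) (by positivity)⟩
  · intro n hn
    simp [hfg, coeff_expand_of_not_dvd _ _ _ hn]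
  · intro j
    have hj : (j : ℚ) + 1 ≤ ((N - 1) * j : ℕ) + 1 := by
      gcongr; exact Nat.le_mul_of_pos_left j (Nat.pos_of_ne_zero hm)
    have h : |coeff j (eulerSeriesDiff ℓ)| ≤ (((N - 1) * j : ℕ) + 1) ^ ℓ * (ℓ : ℚ) ^ j :=
      (abs_coeff_eulerSeriesDiff_le (by omega) j).trans (by gcongr)
    rw [hfg, coeff_expand_mul]
    exact_mod_cast h
  · intro j
    rw [hfg, coeff_expand_mul]
    exact_mod_cast (pow_le_coeff_succ_eulerSeriesDiff hℓ j).trans (le_abs_self _)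
end
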